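/- arXiv:1606.02832 — 2 statements merged into one kernel-verified Lean document; each statement's English description precedes it below -/
import Mathlib

section
/- For 1 < p < 2 there exists a constant C > 0 depending only on p such that for all real numbers t, r: |t - r|^p ≤ C ((|t|^{p-2}t - |r|^{p-2}r)(t - r))^{p/2} (|t|^p + |r|^p)^{(2-p)/2}. -/
/-!
Write `a(t) = |t|^(p-2) t` and `M = max |t| |r|`. For `r < t` with `|r| ≤ t = M`, the tangent line
of the concave function `x ↦ x^(p-1)` at `t` (when `r ≥ 0`), or simply `a(r) ≤ 0` and
`t - r ≤ 2t` (when `r < 0`), gives `a(t) - a(r) ≥ (p-1)/2 · M^(p-2) (t - r)`; oddness of `a`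
reduces every other case to this one. Hence `(a(t) - a(r))(t - r) ≥ (p-1)/2 · M^(p-2) |t - r|²`,
and raising to `p/2` and multiplying by `(|t|^p + |r|^p)^((2-p)/2) ≥ M^(p(2-p)/2)` makes the
powers of `M` cancel, with `C = (2/(p-1))^(p/2)`.
-/

open Real

theorem rpow_le_rpow_add_mul_rpow_sub_one_mul_sub {q : ℝ} (hq0 : 0 ≤ q) (hq1 : q ≤ 1)
    {r t : ℝ} (hr : 0 ≤ r) (ht : 0 < t) :
    r ^ q ≤ t ^ q + q * t ^ (q - 1) * (r - t) := by
  have hbern := rpow_one_add_le_one_add_mul_self (s := r / t - 1)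
    (by linarith [div_nonneg hr ht.le]) hq0 hq1
  rw [add_sub_cancel, div_rpow hr ht.le, div_le_iff₀ (rpow_pos_of_pos ht q)] at hbern
  calc r ^ q ≤ (1 + q * (r / t - 1)) * t ^ q := hbern
    _ = t ^ q + q * t ^ (q - 1) * (r - t) := by
      rw [rpow_sub_one ht.ne']; field_simp

noncomputable def signedRpow (p t : ℝ) : ℝ := |t| ^ (p - 2) * t

theorem signedRpow_neg (p t : ℝ) : signedRpow p (-t) = -signedRpow p t := by
  simp only [signedRpow, abs_neg, mul_neg]

theorem signedRpow_of_nonneg {p t : ℝ} (hp : p ≠ 1) (ht : 0 ≤ t) :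
    signedRpow p t = t ^ (p - 1) := by
  rcases ht.eq_or_lt with rfl | ht
  · simp [signedRpow, zero_rpow (sub_ne_zero.mpr hp)]
  · rw [signedRpow, abs_of_pos ht, show p - 1 = p - 2 + 1 by ring, rpow_add_one ht.ne']

theorem signedRpow_nonpos {p t : ℝ} (ht : t ≤ 0) : signedRpow p t ≤ 0 :=
  mul_nonpos_of_nonneg_of_nonpos (rpow_nonneg (abs_nonneg t) _) ht

theorem mul_rpow_sub_two_mul_sub_le_signedRpow_sub {p r t : ℝ} (hp1 : 1 < p) (hp2 : p ≤ 2)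
    (hrt : r < t) (hr : |r| ≤ t) :
    (p - 1) / 2 * t ^ (p - 2) * (t - r) ≤ signedRpow p t - signedRpow p r := by
  have ht : 0 < t := by rcases abs_cases r with ⟨_, _⟩ | ⟨_, _⟩ <;> linarith
  have hgap : 0 ≤ t ^ (p - 2) * (t - r) :=
    mul_nonneg (rpow_nonneg ht.le _) (sub_nonneg.mpr hrt.le)
  rw [signedRpow_of_nonneg hp1.ne' ht.le]
  rcases le_or_gt 0 r with hr0 | hr0
  · have htangent := rpow_le_rpow_add_mul_rpow_sub_one_mul_sub (q := p - 1) (by linarith)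
      (by linarith) hr0 ht
    rw [show p - 1 - 1 = p - 2 by ring] at htangent
    rw [signedRpow_of_nonneg hp1.ne' hr0]
    nlinarith
  · have hdiam : t - r ≤ 2 * t := by rw [abs_of_neg hr0] at hr; linarith
    have hpow : t ^ (p - 1) = t ^ (p - 2) * t := by
      rw [show p - 1 = p - 2 + 1 by ring, rpow_add_one ht.ne']
    nlinarith [signedRpow_nonpos (p := p) hr0.le,
      mul_le_mul_of_nonneg_left hdiam (rpow_nonneg ht.le (p - 2))]

theorem mul_max_rpow_mul_sq_le_signedRpow_sub_mul_sub {p : ℝ} (hp1 : 1 < p) (hp2 : p ≤ 2)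
    (t r : ℝ) :
    (p - 1) / 2 * max |t| |r| ^ (p - 2) * (t - r) ^ 2 ≤
      (signedRpow p t - signedRpow p r) * (t - r) := by
  wlog hrt : r < t generalizing t r
  · rcases (not_lt.mp hrt).eq_or_lt with rfl | htr
    · simp
    · have := this r t htr
      rw [max_comm] at this
      linarith [show (t - r) ^ 2 = (r - t) ^ 2 by ring]
  wlog hr : |r| ≤ t generalizing t r
  · have hr0 : r < 0 := by rcases abs_cases r with ⟨_, _⟩ | ⟨_, _⟩ <;> linarith
    rw [abs_of_neg hr0, not_le] at hr
    have := this (-r) (-t) (by linarith) (by rw [abs_neg, abs_le]; constructor <;> linarith)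
    simp only [abs_neg, signedRpow_neg, max_comm |r|] at this
    linarith [show (-r - -t) ^ 2 = (t - r) ^ 2 by ring]
  have hmax : max |t| |r| = t := by
    rw [max_eq_left (hr.trans (le_abs_self t)), abs_of_nonneg ((abs_nonneg r).trans hr)]
  rw [hmax, sq, ← mul_assoc]
  exact mul_le_mul_of_nonneg_right (mul_rpow_sub_two_mul_sub_le_signedRpow_sub hp1 hp2 hrt hr)
    (sub_nonneg.mpr hrt.le)

theorem abs_rpow_eq_inv_rpow_mul_rpow_mul_rpow {M c : ℝ} (hM : 0 < M) (hc : 0 < c) (p s : ℝ) :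
    |s| ^ p = c⁻¹ ^ (p / 2) * (c * M ^ (p - 2) * s ^ 2) ^ (p / 2) * (M ^ p) ^ ((2 - p) / 2) := by
  have hsq : s ^ 2 = |s| ^ (2 : ℝ) := by rw [rpow_two, sq_abs]
  have hMpow : (M ^ (p - 2)) ^ (p / 2) * (M ^ p) ^ ((2 - p) / 2) = 1 := by
    rw [← rpow_mul hM.le, ← rpow_mul hM.le, ← rpow_add hM,
      show (p - 2) * (p / 2) + p * ((2 - p) / 2) = 0 by ring, rpow_zero]
  rw [hsq, mul_rpow (by positivity) (by positivity), mul_rpow hc.le (by positivity),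
    ← rpow_mul (abs_nonneg s), show (2 : ℝ) * (p / 2) = p by ring, inv_rpow hc.le]
  calc |s| ^ p
      = |s| ^ p * ((M ^ (p - 2)) ^ (p / 2) * (M ^ p) ^ ((2 - p) / 2)) *
          ((c ^ (p / 2))⁻¹ * c ^ (p / 2)) := by
        rw [hMpow, inv_mul_cancel₀ (rpow_pos_of_pos hc _).ne']; ring
    _ = _ := by ring

theorem stmt4 (p : ℝ) (hp1 : 1 < p) (hp2 : p < 2) :
    ∃ C > 0, ∀ t r : ℝ,
      |t - r| ^ p ≤ C * ((|t| ^ (p - 2) * t - |r| ^ (p - 2) * r) * (t - r)) ^ (p / 2) *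
        (|t| ^ p + |r| ^ p) ^ ((2 - p) / 2) := by
  have hc : 0 < (p - 1) / 2 := by linarith
  refine ⟨((p - 1) / 2)⁻¹ ^ (p / 2), by positivity, fun t r => ?_⟩
  rcases eq_or_ne t r with rfl | htr
  · simp [zero_rpow (by linarith : p ≠ 0), zero_rpow (by linarith : p / 2 ≠ 0)]
  have hM : 0 < max |t| |r| := lt_max_iff.mpr (by
    rcases eq_or_ne t 0 with rfl | ht
    · exact Or.inr (abs_pos.mpr htr.symm)
    · exact Or.inl (abs_pos.mpr ht))
  have hlower_bound := mul_max_rpow_mul_sq_le_signedRpow_sub_mul_sub hp1 hp2.le t r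
  have hMp : max |t| |r| ^ p ≤ |t| ^ p + |r| ^ p := by
    rcases max_choice |t| |r| with h | h <;> rw [h] <;>
      linarith [rpow_nonneg (abs_nonneg t) p, rpow_nonneg (abs_nonneg r) p]
  rw [abs_rpow_eq_inv_rpow_mul_rpow_mul_rpow hM hc]
  have hlower_nonneg : 0 ≤ (p - 1) / 2 * max |t| |r| ^ (p - 2) * (t - r) ^ 2 := by positivity
  gcongr _ * ?_ ^ _ * ?_ ^ _
  · exact mul_nonneg (by positivity) (rpow_nonneg (hlower_nonneg.trans hlower_bound) _)
  · exact hlower_bound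
end

section
/- Let U ⊂ ℝ^d be an open bounded connected set star-shaped with respect to every point of a ball of radius ρ h_U (ρ > 0, h_U = diam U). Let p ∈ [1,∞], integers l ≥ 0, s ∈ {1,…,l+1}, q, m ∈ {0,…,s}, and let π : W^{q,1}(U) → P_l(U) be a projector (πw = w for all w ∈ P_l(U)) satisfying the boundedness: if m < q then |πv|_{W^{m,p}(U)} ≤ C Σ_{r=m}^{q} h_U^{r-m}|v|_{W^{r,p}(U)}, and if m ≥ q then |πv|_{W^{q,p}(U)} ≤ C |v|_{W^{q,p}(U)}, for all v ∈ W^{q,p}(U). Assume further the averaged Taylor polynomial estimates: every v ∈ W^{s,p}(U) decomposes as v = Q^s v + R^s v with Q^s v ∈ P_{s-1}(U) and |R^s v|_{W^{r,p}(U)} ≤ C' h_U^{s-r}|v|_{W^{s,p}(U)} for r ∈ {0,…,s}, and the reverse Sobolev embedding |w|_{W^{m,p}(U)} ≤ C'' h_U^{q-m}|w|_{W^{q,p}(U)} for all polynomials w ∈ P_l(U) when m ≥ q. Then there is C''' > 0 (depending only on C, C', C'', l, q, m, s, p, d) such that |v - πv|_{W^{m,p}(U)} ≤ C''' h_U^{s-m}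 |v|_{W^{s,p}(U)} for all v ∈ W^{s,p}(U). -/
/-!
Since `π` fixes the polynomial part `Qˢv`, the error `v - πv` equals `Rˢv - π(Rˢv)`. The
remainder `Rˢv` is small in every seminorm of order `r ≤ s`, and the stability of `π` transfers
this to `π(Rˢv)`: directly when `m < q`, and via the reverse embedding on polynomials when
`q ≤ m`.
-/

open Real Finset

theorem sub_map_eq_of_eq_add_of_map_eq_self {G F : Type*} [AddCommGroup G] [FunLike F G G]
    [AddMonoidHomClass F G G] (T : F)
    {v a b : G} (hv : v = a + b) (ha : T a = a) : v - T v = b - T b := by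
  rw [hv, map_add, ha]
  abel

theorem rpow_sub_mul_rpow_sub {h : ℝ} (hh : 0 < h) (a b c : ℝ) :
    h ^ (b - a) * h ^ (c - b) = h ^ (c - a) := by
  rw [← rpow_add hh]
  ring_nf

theorem sum_Icc_rpow_mul_le {f : ℕ → ℝ} {h K : ℝ} (hh : 0 < h) {m q s : ℕ}
    (hf : ∀ r ∈ Icc m q, f r ≤ K * h ^ ((s : ℝ) - r)) :
    ∑ r ∈ Icc m q, h ^ ((r : ℝ) - m) * f r ≤ (q + 1 - m : ℕ) * (K * h ^ ((s : ℝ) - m)) := by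
  calc ∑ r ∈ Icc m q, h ^ ((r : ℝ) - m) * f r
      ≤ ∑ _r ∈ Icc m q, K * h ^ ((s : ℝ) - m) := sum_le_sum fun r hr => ?_
    _ = (q + 1 - m : ℕ) * (K * h ^ ((s : ℝ) - m)) := by
      rw [sum_const, Nat.card_Icc, nsmul_eq_mul]
  calc h ^ ((r : ℝ) - m) * f r ≤ h ^ ((r : ℝ) - m) * (K * h ^ ((s : ℝ) - r)) :=
        mul_le_mul_of_nonneg_left (hf r hr) (rpow_nonneg hh.le _)
    _ = K * h ^ ((s : ℝ) - m) := by rw [mul_left_comm, rpow_sub_mul_rpow_sub hh]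

section StableMap

variable {V : Type*} [AddCommGroup V] [Module ℝ V] (N : ℕ → Seminorm ℝ V)
  {h C K : ℝ} {s q m : ℕ} {T : V → V} {w : V}

theorem seminorm_map_le_of_lt (hh : 0 < h) (hC : 0 ≤ C) (hmq : m < q) (hqs : q ≤ s)
    (hT : ∀ v, N m (T v) ≤ C * ∑ r ∈ Icc m q, h ^ ((r : ℝ) - m) * N r v)
    (hw : ∀ r ≤ s, N r w ≤ K * h ^ ((s : ℝ) - r)) :
    N m (T w) ≤ C * (s + 1) * (K * h ^ ((s : ℝ) - m)) := by
  have hbound_nonneg : 0 ≤ K * h ^ ((s : ℝ) - m) := (apply_nonneg _ _).trans (hw m (by omega))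
  have hcard : ((q + 1 - m : ℕ) : ℝ) ≤ s + 1 := by exact_mod_cast (by omega : q + 1 - m ≤ s + 1)
  calc N m (T w) ≤ C * ∑ r ∈ Icc m q, h ^ ((r : ℝ) - m) * N r w := hT w
    _ ≤ C * ((q + 1 - m : ℕ) * (K * h ^ ((s : ℝ) - m))) :=
      mul_le_mul_of_nonneg_left
        (sum_Icc_rpow_mul_le hh fun r hr => hw r ((mem_Icc.1 hr).2.trans hqs)) hC
    _ ≤ C * (s + 1) * (K * h ^ ((s : ℝ) - m)) := by
      rw [mul_assoc]
      gcongr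

theorem seminorm_map_le_of_le {P : Set V} {C'' : ℝ} (hh : 0 < h) (hC : 0 ≤ C)
    (hC'' : 0 ≤ C'') (hTP : ∀ v, T v ∈ P)
    (hT : ∀ v, N q (T v) ≤ C * N q v)
    (hrev : ∀ u ∈ P, N m u ≤ C'' * h ^ ((q : ℝ) - m) * N q u)
    (hw : N q w ≤ K * h ^ ((s : ℝ) - q)) :
    N m (T w) ≤ C'' * C * (K * h ^ ((s : ℝ) - m)) := by
  have hpow : 0 ≤ C'' * h ^ ((q : ℝ) - m) := mul_nonneg hC'' (rpow_nonneg hh.le _)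
  calc N m (T w) ≤ C'' * h ^ ((q : ℝ) - m) * N q (T w) := hrev _ (hTP w)
    _ ≤ C'' * h ^ ((q : ℝ) - m) * (C * (K * h ^ ((s : ℝ) - q))) :=
      mul_le_mul_of_nonneg_left ((hT w).trans (mul_le_mul_of_nonneg_left hw hC)) hpow
    _ = C'' * C * (K * (h ^ ((q : ℝ) - m) * h ^ ((s : ℝ) - q))) := by ring
    _ = C'' * C * (K * h ^ ((s : ℝ) - m)) := by rw [rpow_sub_mul_rpow_sub hh]

theorem seminorm_map_le {P : Set V} {C'' : ℝ} (hh : 0 < h) (hC : 0 ≤ C) (hC'' : 0 ≤ C'')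
    (hm : m ≤ s) (hqs : q ≤ s) (hTP : ∀ v, T v ∈ P)
    (hT₁ : m < q → ∀ v, N m (T v) ≤ C * ∑ r ∈ Icc m q, h ^ ((r : ℝ) - m) * N r v)
    (hT₂ : q ≤ m → ∀ v, N q (T v) ≤ C * N q v)
    (hrev : q ≤ m → ∀ u ∈ P, N m u ≤ C'' * h ^ ((q : ℝ) - m) * N q u)
    (hw : ∀ r ≤ s, N r w ≤ K * h ^ ((s : ℝ) - r)) :
    N m (T w) ≤ (C * (s + 1) + C'' * C) * (K * h ^ ((s : ℝ) - m)) := by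
  have hbound_nonneg : 0 ≤ K * h ^ ((s : ℝ) - m) := (apply_nonneg _ _).trans (hw m hm)
  rcases lt_or_ge m q with hmq | hqm
  · have := seminorm_map_le_of_lt N hh hC hmq hqs (hT₁ hmq) hw
    nlinarith [mul_nonneg (mul_nonneg hC'' hC) hbound_nonneg]
  · have := seminorm_map_le_of_le N hh hC hC'' hTP (hT₂ hqm) (hrev hqm) (hw q hqs)
    nlinarith [mul_nonneg (mul_nonneg hC (by positivity : (0 : ℝ) ≤ s + 1)) hbound_nonneg]

end StableMap

theorem stmt11_general {V : Type*} [AddCommGroup V] [Module ℝ V]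
    (N : ℕ → Seminorm ℝ V) (P : Submodule ℝ V)
    (hU : ℝ) (hhU : 0 < hU)
    (s q m : ℕ) (hq : q ≤ s) (hm : m ≤ s)
    (pr : V →ₗ[ℝ] V) (hprP : ∀ v, pr v ∈ P) (hprproj : ∀ w ∈ P, pr w = w)
    (C C' C'' : ℝ) (hC : 0 < C) (hC' : 0 < C') (hC'' : 0 < C'')
    (hbound1 : m < q → ∀ v, N m (pr v) ≤
      C * ∑ r ∈ Finset.Icc m q, hU ^ ((r : ℝ) - (m : ℝ)) * N r v)
    (hbound2 : q ≤ m → ∀ v, N q (pr v) ≤ C * N q v)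
    (Q R : V → V) (hQR : ∀ v, v = Q v + R v) (hQP : ∀ v, Q v ∈ P)
    (hR : ∀ v, ∀ r ≤ s, N r (R v) ≤ C' * hU ^ ((s : ℝ) - (r : ℝ)) * N s v)
    (hrev : q ≤ m → ∀ w ∈ P, N m w ≤ C'' * hU ^ ((q : ℝ) - (m : ℝ)) * N q w) :
    ∃ C''' > 0, ∀ v : V, N m (v - pr v) ≤ C''' * hU ^ ((s : ℝ) - (m : ℝ)) * N s v := by
  refine ⟨C' * (1 + (C * (s + 1) + C'' * C)), by positivity, fun v => ?_⟩
  have hRv : ∀ r ≤ s, N r (R v) ≤ C' * N s v * hU ^ ((s : ℝ) - r) := fun r hr =>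
    (hR v r hr).trans_eq (by ring)
  have hpr : N m (pr (R v)) ≤ (C * (s + 1) + C'' * C) * (C' * N s v * hU ^ ((s : ℝ) - m)) :=
    seminorm_map_le N (P := P) hhU hC.le hC''.le hm hq hprP hbound1 hbound2 hrev hRv
  calc N m (v - pr v) = N m (R v - pr (R v)) := by
        rw [sub_map_eq_of_eq_add_of_map_eq_self pr (hQR v) (hprproj _ (hQP v))]
    _ ≤ N m (R v) + N m (pr (R v)) := map_sub_le_add _ _ _
    _ ≤ C' * N s v * hU ^ ((s : ℝ) - m)
          + (C * (s + 1) + C'' * C) * (C' * N s v * hU ^ ((s : ℝ) - m)) :=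
      add_le_add (hRv m hm) hpr
    _ = C' * (1 + (C * (s + 1) + C'' * C)) * hU ^ ((s : ℝ) - m) * N s v := by ring

theorem stmt11 {V : Type*} [AddCommGroup V] [Module ℝ V]
    (N : ℕ → Seminorm ℝ V) (P : Submodule ℝ V)
    (hU : ℝ) (hhU : 0 < hU)
    (l s q m : ℕ) (hs1 : 1 ≤ s) (hsl : s ≤ l + 1) (hq : q ≤ s) (hm : m ≤ s)
    (pr : V →ₗ[ℝ] V) (hprP : ∀ v, pr v ∈ P) (hprproj : ∀ w ∈ P, pr w = w)
    (C C' C'' : ℝ) (hC : 0 < C) (hC' : 0 < C') (hC'' : 0 < C'')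
    (hbound1 : m < q → ∀ v, N m (pr v) ≤
      C * ∑ r ∈ Finset.Icc m q, hU ^ ((r : ℝ) - (m : ℝ)) * N r v)
    (hbound2 : q ≤ m → ∀ v, N q (pr v) ≤ C * N q v)
    (Q R : V → V) (hQR : ∀ v, v = Q v + R v) (hQP : ∀ v, Q v ∈ P)
    (hR : ∀ v, ∀ r ≤ s, N r (R v) ≤ C' * hU ^ ((s : ℝ) - (r : ℝ)) * N s v)
    (hrev : q ≤ m → ∀ w ∈ P, N m w ≤ C'' * hU ^ ((q : ℝ) - (m : ℝ)) * N q w) :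
    ∃ C''' > 0, ∀ v : V, N m (v - pr v) ≤ C''' * hU ^ ((s : ℝ) - (m : ℝ)) * N s v :=
  stmt11_general N P hU hhU s q m hq hm pr hprP hprproj C C' C'' hC hC' hC'' hbound1 hbound2 Q R hQR
    hQP hR hrev
end
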